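/- (Overwhelming majority implies no surprise.) In the two-candidate P_2-voter model, if the winning margin is so large that (p_{22}/p_{21})·((1/2 − ε)/(1/2 + ε)) < 1, and the voter's estimates are regular, i.e., p̂_{22} ≥ p̂_{21}, then there exists N such that for all n ≥ N, P(Z > 0) ≤ exp(−2·(p̂_{22}·p̂_{21}/(p̂_{22} + p̂_{21}))²·√n); hence such a P_2 voter is not surprised with high probability. -/

import Mathlib

/-!
Each `Yᵢ` is bounded, so its moment generating function `M` is smooth with `M(0) = 1` and
`M'(0) = E[Yᵢ] = a/p̂₂₂ - b/p̂₂₁`, where `a = (1/2 - ε) p₂₂` and `b = (1/2 + ε) p₂₁`. The margin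
condition says `a < b`, and regularity `p̂₂₁ ≤ p̂₂₂` then makes the drift negative. Hence
`q := M(t) < 1` for some `t > 0`, and the Chernoff bound gives
`P(Z > 0) ≤ P(Y₁ + ⋯ + Y_{n-1} ≥ -1) ≤ eᵗ qⁿ⁻¹`, which decays exponentially in `n` and so
eventually beats `exp(-C √n)` for every constant `C`.
-/

open MeasureTheory ProbabilityTheory Filter Finset Real

lemma HasDerivAt.exists_pos_lt_of_neg {f : ℝ → ℝ} {f' x : ℝ} (hf : HasDerivAt f f' x)
    (hf' : f' < 0) : ∃ t > 0, f (x + t) < f x := by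
  obtain ⟨t, hslope, ht⟩ :=
    ((hf.tendsto_slope_zero_right.eventually (gt_mem_nhds hf')).and self_mem_nhdsWithin).exists
  exact ⟨t, ht, sub_neg.mp (neg_of_mul_neg_right hslope (inv_nonneg.mpr ht.le))⟩

lemma eventually_exp_mul_pow_le_exp_neg_mul_sqrt {q : ℝ} (hq₀ : 0 < q) (hq₁ : q < 1)
    (s C : ℝ) : ∀ᶠ n : ℕ in atTop, exp s * q ^ (n - 1) ≤ exp (-C * √n) := by
  set r := -log q
  have hr : 0 < r := neg_pos.mpr (log_neg hq₀ hq₁)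
  -- at `x = √n` this is `(n - 1) r - C √n - s`
  have hquad : Tendsto (fun x : ℝ => x * (r * x - C) - (s + r)) atTop atTop :=
    tendsto_atTop_add_const_right _ _
      (tendsto_id.atTop_mul_atTop₀ (tendsto_atTop_add_const_right _ _
        (tendsto_id.const_mul_atTop hr)))
  have hsqrt : Tendsto (fun n : ℕ => √(n : ℝ)) atTop atTop :=
    tendsto_sqrt_atTop.comp tendsto_natCast_atTop_atTop
  filter_upwards [(hquad.comp hsqrt).eventually_ge_atTop 0] with n hn
  have hsq : √(n : ℝ) * √n = n := mul_self_sqrt n.cast_nonneg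
  have hpred : (n : ℝ) - 1 ≤ ((n - 1 : ℕ) : ℝ) := by
    rcases n with _ | n <;> simp
  rw [← rpow_natCast, rpow_def_of_pos hq₀, ← exp_add, exp_le_exp]
  simp only [Function.comp] at hn
  nlinarith

section FiniteRange

variable {Ω α E : Type*} [MeasurableSpace Ω] {μ : Measure Ω} [NormedAddCommGroup E] {X : Ω → α}

lemma comp_ae_eq_sum_indicator_of_ae_mem {s : Finset α} (hs : ∀ᵐ ω ∂μ, X ω ∈ s) (f : α → E) :
    (fun ω => f (X ω)) =ᵐ[μ] fun ω => ∑ x ∈ s, (X ⁻¹' {x}).indicator (fun _ => f x) ω := by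
  filter_upwards [hs] with ω hω
  rw [sum_eq_single_of_mem (X ω) hω fun x _ hx =>
    Set.indicator_of_notMem (fun h => hx h.symm) _]
  simp

variable [MeasurableSpace α] [MeasurableSingletonClass α]

lemma ae_mem_of_sum_measure_preimage_singleton_eq_one [IsProbabilityMeasure μ]
    (hX : Measurable X) {s : Finset α} (hs : ∑ x ∈ s, μ (X ⁻¹' {x}) = 1) :
    ∀ᵐ ω ∂μ, X ω ∈ s := by
  rw [sum_measure_preimage_singleton s fun x _ => hX (measurableSet_singleton x)] at hs
  exact (ae_mem_iff_measure_eq (hX s.measurableSet).nullMeasurableSet).mpr (by simpa using hs)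

lemma integrable_comp_of_ae_mem [IsFiniteMeasure μ] (hX : Measurable X) {s : Finset α}
    (hs : ∀ᵐ ω ∂μ, X ω ∈ s) (f : α → E) : Integrable (fun ω => f (X ω)) μ :=
  (integrable_finsetSum s fun x _ =>
    (integrable_const (f x)).indicator (hX (measurableSet_singleton x))).congr
    (comp_ae_eq_sum_indicator_of_ae_mem hs f).symm

lemma integral_comp_eq_sum_of_ae_mem [NormedSpace ℝ E] [CompleteSpace E] [IsFiniteMeasure μ]
    (hX : Measurable X) {s : Finset α} (hs : ∀ᵐ ω ∂μ, X ω ∈ s) (f : α → E) :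
    ∫ ω, f (X ω) ∂μ = ∑ x ∈ s, μ.real (X ⁻¹' {x}) • f x := by
  have hfib : ∀ x, MeasurableSet (X ⁻¹' {x}) := fun x => hX (measurableSet_singleton x)
  rw [integral_congr_ae (comp_ae_eq_sum_indicator_of_ae_mem hs f),
    integral_finsetSum s fun x _ => (integrable_const (f x)).indicator (hfib x)]
  exact sum_congr rfl fun x _ => integral_indicator_const (f x) (hfib x)

end FiniteRange

section ThreePoint

variable {Ω α E : Type*} [MeasurableSpace Ω] {μ : Measure Ω} [IsProbabilityMeasure μ]
  [MeasurableSpace α] [MeasurableSingletonClass α] [DecidableEq α] {X : Ω → α}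
  {x₁ x₂ x₃ : α} {p₁ p₂ : ℝ}

lemma ae_mem_of_three_point (hX : Measurable X) (h₁₂ : x₁ ≠ x₂) (h₁₃ : x₁ ≠ x₃)
    (h₂₃ : x₂ ≠ x₃) (hp₁ : 0 ≤ p₁) (hp₂ : 0 ≤ p₂) (hp : p₁ + p₂ ≤ 1)
    (h₁ : μ (X ⁻¹' {x₁}) = .ofReal p₁) (h₂ : μ (X ⁻¹' {x₂}) = .ofReal p₂)
    (h₃ : μ (X ⁻¹' {x₃}) = .ofReal (1 - p₁ - p₂)) :
    ∀ᵐ ω ∂μ, X ω ∈ ({x₁, x₂, x₃} : Finset α) := by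
  refine ae_mem_of_sum_measure_preimage_singleton_eq_one hX ?_
  rw [sum_insert (by simp [h₁₂, h₁₃]), sum_pair h₂₃, h₁, h₂, h₃,
    ← ENNReal.ofReal_add hp₂ (by linarith), ← ENNReal.ofReal_add hp₁ (by linarith)]
  norm_num

lemma integral_comp_of_three_point [NormedAddCommGroup E] [NormedSpace ℝ E] [CompleteSpace E]
    (hX : Measurable X) (h₁₂ : x₁ ≠ x₂) (h₁₃ : x₁ ≠ x₃)
    (h₂₃ : x₂ ≠ x₃) (hp₁ : 0 ≤ p₁) (hp₂ : 0 ≤ p₂) (hp : p₁ + p₂ ≤ 1)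
    (h₁ : μ (X ⁻¹' {x₁}) = .ofReal p₁) (h₂ : μ (X ⁻¹' {x₂}) = .ofReal p₂)
    (h₃ : μ (X ⁻¹' {x₃}) = .ofReal (1 - p₁ - p₂)) (f : α → E) :
    ∫ ω, f (X ω) ∂μ = p₁ • f x₁ + p₂ • f x₂ + (1 - p₁ - p₂) • f x₃ := by
  rw [integral_comp_eq_sum_of_ae_mem hX
      (ae_mem_of_three_point hX h₁₂ h₁₃ h₂₃ hp₁ hp₂ hp h₁ h₂ h₃),
    sum_insert (by simp [h₁₂, h₁₃]), sum_pair h₂₃, measureReal_def, measureReal_def,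
    measureReal_def, h₁, h₂, h₃, ENNReal.toReal_ofReal hp₁, ENNReal.toReal_ofReal hp₂,
    ENNReal.toReal_ofReal (by linarith), add_assoc]

end ThreePoint

lemma exists_pos_mgf_lt_one_of_integral_neg {Ω : Type*} [MeasurableSpace Ω] {μ : Measure Ω}
    [IsProbabilityMeasure μ] {X : Ω → ℝ}
    (hX : ∀ t, Integrable (fun ω => exp (t * X ω)) μ) (hmean : μ[X] < 0) :
    ∃ t > 0, mgf X μ t < 1 := by
  have hset : integrableExpSet X μ = Set.univ := Set.eq_univ_of_forall hX
  have hderiv : HasDerivAt (mgf X μ) μ[X] 0 := by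
    simpa using hasDerivAt_mgf (X := X) (μ := μ) (t := 0) (by simp [hset])
  obtain ⟨t, ht, hlt⟩ := hderiv.exists_pos_lt_of_neg hmean
  exact ⟨t, ht, by simpa using hlt⟩

namespace ProbabilityTheory

lemma iIndepFun.measure_sum_ge_le_exp_mul_pow {Ω ι : Type*} [MeasurableSpace Ω]
    {μ : Measure Ω} {Y : ι → Ω → ℝ} (hindep : iIndepFun Y μ) (hmeas : ∀ i, Measurable (Y i))
    {s : Finset ι} {t q : ℝ} (ht : 0 ≤ t)
    (hint : ∀ i ∈ s, Integrable (fun ω => exp (t * Y i ω)) μ)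
    (hmgf : ∀ i ∈ s, mgf (Y i) μ t = q) (x : ℝ) :
    μ.real {ω | x ≤ ∑ i ∈ s, Y i ω} ≤ exp (-t * x) * q ^ #s := by
  have := hindep.isProbabilityMeasure
  have hchernoff := measure_ge_le_exp_mul_mgf x ht (hindep.integrable_exp_mul_sum hmeas hint)
  rw [hindep.mgf_sum hmeas, prod_congr rfl hmgf, prod_const] at hchernoff
  simpa only [Finset.sum_apply] using hchernoff

end ProbabilityTheory

theorem surprise_two_candidates_overwhelming_majority_general
    {Ω : Type*} [MeasurableSpace Ω] (μ : Measure Ω) [IsProbabilityMeasure μ]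
    (ε : ℝ) (hε : 0 < ε) (hε' : ε < 1/2)
    (p22 p21 phat22 phat21 : ℝ)
    (hp22 : 0 < p22) (hp22' : p22 ≤ 1) (hp21 : 0 < p21) (hp21' : p21 ≤ 1)
    (hphat22 : 0 < phat22)
    (hphat21 : 0 < phat21)
    (Y : ℕ → Ω → ℝ) (hmeas : ∀ i, Measurable (Y i))
    (hindep : iIndepFun Y μ)
    (hY1 : ∀ i, μ {ω | Y i ω = 1/phat22} = ENNReal.ofReal ((1/2 - ε) * p22))
    (hY2 : ∀ i, μ {ω | Y i ω = -1/phat21} = ENNReal.ofReal ((1/2 + ε) * p21))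
    (hY0 : ∀ i, μ {ω | Y i ω = 0} =
      ENNReal.ofReal (1 - (1/2 - ε) * p22 - (1/2 + ε) * p21))
    (hmargin : (p22 / p21) * ((1/2 - ε) / (1/2 + ε)) < 1)
    (hregular : phat22 ≥ phat21) :
    ∃ N : ℕ, ∀ n : ℕ, N ≤ n →
      μ {ω | 0 < 1 + ∑ i ∈ Finset.range (n - 1), Y i ω} ≤
        ENNReal.ofReal
          (Real.exp (-2 * (phat22 * phat21 / (phat22 + phat21))^2 * Real.sqrt n)) := by
  classical
  have ha : 0 ≤ (1/2 - ε) * p22 := by nlinarith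
  have hb : 0 ≤ (1/2 + ε) * p21 := by nlinarith
  have hab : (1/2 - ε) * p22 + (1/2 + ε) * p21 ≤ 1 := by nlinarith
  have hx₁ : 0 < 1 / phat22 := by positivity
  have hx₂ : -1 / phat21 < 0 := by rw [neg_div]; exact neg_neg_of_pos (by positivity)
  have hlaw (i : ℕ) (f : ℝ → ℝ) : ∫ ω, f (Y i ω) ∂μ = (1/2 - ε) * p22 * f (1 / phat22)
      + (1/2 + ε) * p21 * f (-1 / phat21) + (1 - (1/2 - ε) * p22 - (1/2 + ε) * p21) * f 0 := by
    simpa only [smul_eq_mul] using integral_comp_of_three_point (hmeas i) (hx₂.trans hx₁).ne'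
      hx₁.ne' hx₂.ne ha hb hab (hY1 i) (hY2 i) (hY0 i) f
  have hexp (i : ℕ) (t : ℝ) : Integrable (fun ω => exp (t * Y i ω)) μ :=
    integrable_comp_of_ae_mem (hmeas i) (ae_mem_of_three_point (hmeas i) (hx₂.trans hx₁).ne'
      hx₁.ne' hx₂.ne ha hb hab (hY1 i) (hY2 i) (hY0 i)) (fun y => exp (t * y))
  have hmean : μ[Y 0] < 0 := by
    rw [div_mul_div_comm, div_lt_one (by positivity)] at hmargin
    rw [show μ[Y 0] = ∫ ω, id (Y 0 ω) ∂μ from rfl, hlaw]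
    simp only [id_eq]
    have hdrift : (1/2 - ε) * p22 / phat22 < (1/2 + ε) * p21 / phat21 :=
      (div_le_div_of_nonneg_left ha hphat21 hregular).trans_lt
        (div_lt_div_of_pos_right (by linarith) hphat21)
    field_simp at hdrift ⊢
    linarith
  obtain ⟨t, ht, hq⟩ := exists_pos_mgf_lt_one_of_integral_neg (hexp 0) hmean
  have hmgf (i : ℕ) : mgf (Y i) μ t = mgf (Y 0) μ t := by
    simp only [mgf]
    rw [hlaw i (fun y => exp (t * y)), hlaw 0 (fun y => exp (t * y))]
  obtain ⟨N, hN⟩ := eventually_atTop.mp <| eventually_exp_mul_pow_le_exp_neg_mul_sqrt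
    (mgf_pos (hexp 0 t)) hq t (2 * (phat22 * phat21 / (phat22 + phat21)) ^ 2)
  refine ⟨N, fun n hn => ?_⟩
  calc μ {ω | 0 < 1 + ∑ i ∈ range (n - 1), Y i ω}
      ≤ μ {ω | -1 ≤ ∑ i ∈ range (n - 1), Y i ω} := measure_mono fun ω hω => by
        simp only [Set.mem_ofPred_eq] at hω ⊢; linarith
    _ ≤ _ := by
      rw [ENNReal.le_ofReal_iff_toReal_le (measure_ne_top _ _) (exp_nonneg _)]
      refine (hindep.measure_sum_ge_le_exp_mul_pow hmeas ht.le (fun i _ => hexp i t)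
        (fun i _ => hmgf i) (-1)).trans ?_
      simpa using hN n hn

/-- (Overwhelming majority implies no surprise.)  Two-candidate
model, voter `v ∈ P₂`.  If `(p₂₂/p₂₁)·((1/2-ε)/(1/2+ε)) < 1` and the estimates
are regular, `p̂₂₂ ≥ p̂₂₁`, then there is `N` such that for all `n ≥ N`,
`P(Z > 0) ≤ exp(-2 (p̂₂₂ p̂₂₁/(p̂₂₂+p̂₂₁))² √n)`. -/
theorem surprise_two_candidates_overwhelming_majority
    {Ω : Type*} [MeasurableSpace Ω] (μ : Measure Ω) [IsProbabilityMeasure μ]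
    (ε : ℝ) (hε : 0 < ε) (hε' : ε < 1/2)
    (p22 p21 phat22 phat21 : ℝ)
    (hp22 : 0 < p22) (hp22' : p22 ≤ 1) (hp21 : 0 < p21) (hp21' : p21 ≤ 1)
    (hphat22 : 0 < phat22) (hphat22' : phat22 ≤ 1)
    (hphat21 : 0 < phat21) (hphat21' : phat21 ≤ 1)
    (Y : ℕ → Ω → ℝ) (hmeas : ∀ i, Measurable (Y i))
    (hindep : iIndepFun Y μ)
    (hY1 : ∀ i, μ {ω | Y i ω = 1/phat22} = ENNReal.ofReal ((1/2 - ε) * p22))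
    (hY2 : ∀ i, μ {ω | Y i ω = -1/phat21} = ENNReal.ofReal ((1/2 + ε) * p21))
    (hY0 : ∀ i, μ {ω | Y i ω = 0} =
      ENNReal.ofReal (1 - (1/2 - ε) * p22 - (1/2 + ε) * p21))
    (hmargin : (p22 / p21) * ((1/2 - ε) / (1/2 + ε)) < 1)
    (hregular : phat22 ≥ phat21) :
    ∃ N : ℕ, ∀ n : ℕ, N ≤ n →
      μ {ω | 0 < 1 + ∑ i ∈ Finset.range (n - 1), Y i ω} ≤
        ENNReal.ofReal
          (Real.exp (-2 * (phat22 * phat21 / (phat22 + phat21))^2 * Real.sqrt n)) :=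
  surprise_two_candidates_overwhelming_majority_general μ ε hε hε' p22 p21 phat22 phat21 hp22 hp22'
    hp21 hp21' hphat22 hphat21 Y hmeas hindep hY1 hY2 hY0 hmargin hregular
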